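/- There is a bijection between the set of 'bad' Delannoy paths from (0,0) to (n,n) with l steps and the set of Delannoy paths from (0,0) to (n+1,n-1) with l steps. -/

import Mathlib

inductive Step : Type
  | E | D | N
deriving DecidableEq

instance : Fintype Step :=
  ⟨{Step.E, Step.D, Step.N}, fun x => by cases x <;> simp⟩

open Step Polynomial

/-- All words of length `l` over the step alphabet. -/
def Words (l : ℕ) : Finset (List Step) :=
  (Finset.univ : Finset (Fin l → Step)).image List.ofFn

/-- Delannoy paths from (0,0) to (m,n) with `l` steps, encoded as words:
`#E + #D = m`, `#N + #D = n`, length `l`. -/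
def DelSet (m n l : ℕ) : Finset (List Step) :=
  (Words l).filter fun w => w.count E + w.count D = m ∧ w.count N + w.count D = n

/-- A word is bad if some prefix contains more N's than E's. -/
def bad (w : List Step) : Bool :=
  (List.range (w.length + 1)).any fun k => (w.take k).count E < (w.take k).count N

/-- Bad Delannoy paths from (0,0) to (n,n) with `l` steps. -/
def BDelSet (n l : ℕ) : Finset (List Step) :=
  (DelSet n n l).filter fun w => bad w

/-- Schröder paths: Delannoy paths to (n,n) never going above the diagonal. -/
def SchSet (n l : ℕ) : Finset (List Step) :=
  (DelSet n n l).filter fun w => ¬ bad w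

/-- Major index of a word w_1 ⋯ w_l with respect to a ranking of the letters:
the sum of all positions i (1 ≤ i ≤ l-1) with w_i > w_{i+1}. -/
def maj (rank : Step → ℕ) (w : List Step) : ℕ :=
  ∑ i ∈ Finset.range (w.length - 1),
    if rank (w.getD (i + 1) E) < rank (w.getD i E) then i + 1 else 0

/-- q-integer [m] = 1 + q + ⋯ + q^{m-1}. -/
noncomputable def qint (m : ℕ) : Polynomial ℚ :=
  ∑ i ∈ Finset.range m, X ^ i

/-- q-factorial. -/
noncomputable def qfact : ℕ → Polynomial ℚ
  | 0 => 1
  | m + 1 => qfact m * qint (m + 1)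

/-- Gaussian binomial coefficient, via the q-Pascal recurrence. -/
noncomputable def qbinom : ℕ → ℕ → Polynomial ℚ
  | _, 0 => 1
  | 0, _ + 1 => 0
  | m + 1, k + 1 => qbinom m k + X ^ (k + 1) * qbinom m (k + 1)

/-- q-trinomial coefficient [l]!/([a]![b]![c]!), defined when a+b+c = l. -/
noncomputable def qbinom3 (l a b c : ℕ) : Polynomial ℚ :=
  if a + b + c = l then qbinom l a * qbinom (l - a) b else 0

/-- Depth after the first `i` steps: #N − #E. -/
def depth (w : List Step) (i : ℕ) : ℤ :=
  ((w.take i).count N : ℤ) - (w.take i).count E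

/-- `k` (0 ≤ k ≤ l) achieves the maximal running depth. -/
def isMaxDepth (w : List Step) (k : ℕ) : Bool :=
  (List.range (w.length + 1)).all fun i => decide (depth w i ≤ depth w k)

/-- The first index (number of steps) at which the running depth is maximal. -/
def firstDeep (w : List Step) : ℕ :=
  (List.range (w.length + 1)).findIdx (isMaxDepth w)

/-- The last index at which the running depth is maximal. -/
def lastDeep (w : List Step) : ℕ :=
  w.length - (List.range (w.length + 1)).reverse.findIdx (isMaxDepth w)

/-- Replace the first deepest step (the step w_k, k = firstDeep) with E. -/
def phi (w : List Step) : List Step := w.set (firstDeep w - 1) E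

/-- Replace the step following the last deepest point with N. -/
def phiInv (w : List Step) : List Step := w.set (lastDeep w) N

/-- Number of consecutive D's immediately after the first deepest step. -/
def runS (w : List Step) : ℕ := ((w.drop (firstDeep w)).takeWhile (· == D)).length

/-- Number of consecutive D's immediately before the first deepest step. -/
def runR (w : List Step) : ℕ :=
  ((w.take (firstDeep w - 1)).reverse.takeWhile (· == D)).length

/-- The window map: replace W₁ = D^r w_k D^s by D^{r-1} E D^{s+1} if r ≥ 1,
and by D^s E if r = 0. -/
def phiWin (w : List Step) : List Step :=
  let k := firstDeep w - 1
  let r := runR w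
  let s := runS w
  let seg : List Step :=
    if 1 ≤ r then List.replicate (r - 1) D ++ [E] ++ List.replicate (s + 1) D
    else List.replicate s D ++ [E]
  w.take (k - r) ++ seg ++ w.drop (k + s + 1)

/-- 0-based index of the first step after which the path is above the diagonal. -/
def firstAbove (w : List Step) : ℕ :=
  (List.range w.length).findIdx fun i =>
    decide ((w.take (i + 1)).count E < (w.take (i + 1)).count N)

/-- The map ψ of Bonin–Shapiro–Simion: replace with E the last N of the maximal
run of consecutive N's beginning at the first step going above the diagonal. -/
def psi (w : List Step) : List Step :=
  let i := firstAbove w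
  let j := i + ((w.drop i).takeWhile (· == N)).length - 1
  w.set j E

/-!
A bad path reaches positive depth (#N − #E), so its first deepest point is reached by an N step;
turning that N into an E lowers everything after it by 2, leaving a path to (n+1, n-1) whose last
deepest point is exactly where the changed step starts. Conversely, a path to (n+1, n-1) ends at
depth −2 < 0, so its last deepest point is followed by an E step, and turning it into an N
produces a bad path whose first deepest point is right after the changed step.
-/

def Step.height : Step → ℤ
  | E => -1
  | D => 0
  | N => 1

lemma Step.height_eq (x : Step) :
    x.height = (if x = N then 1 else 0) - (if x = E then 1 else 0) := by
  cases x <;> rfl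

lemma mem_Words {l : ℕ} {w : List Step} : w ∈ Words l ↔ w.length = l := by
  simp only [Words, Finset.mem_image, Finset.mem_univ, true_and]
  constructor
  · rintro ⟨f, rfl⟩
    exact List.length_ofFn
  · rintro rfl
    exact ⟨w.get, List.ofFn_get w⟩

lemma mem_DelSet {m n l : ℕ} {w : List Step} :
    w ∈ DelSet m n l ↔
      w.length = l ∧ w.count E + w.count D = m ∧ w.count N + w.count D = n := by
  simp [DelSet, mem_Words]

lemma mem_BDelSet {n l : ℕ} {w : List Step} :
    w ∈ BDelSet n l ↔ w ∈ DelSet n n l ∧ bad w = true := by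
  simp [BDelSet]

lemma count_set_cast {u : List Step} {j : ℕ} (hj : j < u.length) (c b : Step) :
    ((u.set j c).count b : ℤ) = u.count b - (if u[j] = b then 1 else 0) + (if c = b then 1 else 0) := by
  have hle := List.boole_getElem_le_count (a := b) hj
  rw [List.count_set hj]
  simp only [beq_iff_eq] at hle ⊢
  split_ifs at hle ⊢ <;> omega

section Depth

variable {w : List Step}

lemma depth_zero (w : List Step) : depth w 0 = 0 := by
  simp [depth]

lemma depth_length (w : List Step) : depth w w.length = w.count N - w.count E := by
  simp [depth]

lemma depth_length_of_mem_DelSet {m n l : ℕ} (hw : w ∈ DelSet m n l) :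
    depth w w.length = (n : ℤ) - m := by
  obtain ⟨-, hm, hn⟩ := mem_DelSet.1 hw
  rw [depth_length]
  omega

lemma depth_succ {i : ℕ} (hi : i < w.length) : depth w (i + 1) = depth w i + w[i].height := by
  simp only [depth, List.take_add_one, List.getElem?_eq_getElem hi, Option.toList_some,
    List.count_append, List.count_singleton, beq_iff_eq, Step.height_eq]
  push_cast
  ring

lemma depth_set {j : ℕ} (hj : j < w.length) (c : Step) (i : ℕ) :
    depth (w.set j c) i = depth w i + if j < i then c.height - w[j].height else 0 := by
  rw [depth, depth, List.take_set]
  split_ifs with hji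
  · have hj' : j < (w.take i).length := by simp [hj, hji]
    rw [count_set_cast hj', count_set_cast hj', Step.height_eq, Step.height_eq,
      List.getElem_take]
    ring
  · rw [List.set_eq_of_length_le (by simp; omega)]
    ring

lemma bad_iff_exists_depth_pos : bad w = true ↔ ∃ k ≤ w.length, 0 < depth w k := by
  simp only [bad, List.any_eq_true, List.mem_range, Nat.lt_succ_iff, decide_eq_true_eq, depth,
    sub_pos, Nat.cast_lt]

end Depth

section DeepestPoints

variable {w : List Step}

lemma isMaxDepth_iff {k : ℕ} :
    isMaxDepth w k = true ↔ ∀ i ≤ w.length, depth w i ≤ depth w k := by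
  simp [isMaxDepth]

lemma exists_isMaxDepth (w : List Step) :
    ∃ k ∈ List.range (w.length + 1), isMaxDepth w k = true := by
  obtain ⟨k, hk, hmax⟩ :=
    Finset.exists_max_image (Finset.range (w.length + 1)) (depth w) ⟨0, by simp⟩
  refine ⟨k, by simpa using hk, isMaxDepth_iff.2 fun i hi => hmax i ?_⟩
  simpa [Nat.lt_succ_iff] using hi

lemma findIdx_isMaxDepth_lt (w : List Step) :
    (List.range (w.length + 1)).findIdx (isMaxDepth w) < (List.range (w.length + 1)).length :=
  List.findIdx_lt_length_of_exists (exists_isMaxDepth w)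

lemma firstDeep_le_length (w : List Step) : firstDeep w ≤ w.length := by
  have := findIdx_isMaxDepth_lt w
  rw [List.length_range] at this
  exact Nat.lt_succ_iff.1 this

lemma depth_le_depth_firstDeep {i : ℕ} (hi : i ≤ w.length) :
    depth w i ≤ depth w (firstDeep w) := by
  have hmax := List.findIdx_getElem (w := findIdx_isMaxDepth_lt w)
  rw [List.getElem_range] at hmax
  exact isMaxDepth_iff.1 hmax i hi

lemma depth_lt_depth_firstDeep {i : ℕ} (hi : i < firstDeep w) :
    depth w i < depth w (firstDeep w) := by
  have hfalse := List.not_of_lt_findIdx (p := isMaxDepth w) (xs := List.range (w.length + 1)) hi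
  simp only [List.getElem_range, ← Bool.not_eq_true, isMaxDepth_iff] at hfalse
  push Not at hfalse
  obtain ⟨j, hj, hij⟩ := hfalse
  exact hij.trans_le (depth_le_depth_firstDeep hj)

lemma firstDeep_eq_of {k : ℕ} (hk : k ≤ w.length) (hmax : ∀ i ≤ w.length, depth w i ≤ depth w k)
    (hfirst : ∀ i < k, depth w i < depth w k) : firstDeep w = k := by
  rcases lt_trichotomy (firstDeep w) k with h | h | h
  · exact absurd (depth_le_depth_firstDeep hk) (not_le.2 (hfirst _ h))
  · exact h
  · exact absurd (hmax _ (firstDeep_le_length w)) (not_le.2 (depth_lt_depth_firstDeep h))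

lemma getElem_reverse_range {L p : ℕ} (hp : p < (List.range (L + 1)).reverse.length) :
    (List.range (L + 1)).reverse[p] = L - p := by
  simp only [List.getElem_reverse, List.getElem_range, List.length_range]
  simp at hp
  omega

lemma lastDeep_le_length (w : List Step) : lastDeep w ≤ w.length :=
  Nat.sub_le _ _

lemma findIdx_reverse_isMaxDepth_lt (w : List Step) :
    (List.range (w.length + 1)).reverse.findIdx (isMaxDepth w) <
      (List.range (w.length + 1)).reverse.length := by
  obtain ⟨k, hk, hmax⟩ := exists_isMaxDepth w
  exact List.findIdx_lt_length_of_exists ⟨k, List.mem_reverse.2 hk, hmax⟩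

lemma depth_le_depth_lastDeep {i : ℕ} (hi : i ≤ w.length) :
    depth w i ≤ depth w (lastDeep w) := by
  have hmax := List.findIdx_getElem (w := findIdx_reverse_isMaxDepth_lt w)
  rw [getElem_reverse_range] at hmax
  exact isMaxDepth_iff.1 hmax i hi

lemma depth_lt_depth_lastDeep {i : ℕ} (hi : lastDeep w < i) (hil : i ≤ w.length) :
    depth w i < depth w (lastDeep w) := by
  have hlt := findIdx_reverse_isMaxDepth_lt w
  rw [List.length_reverse, List.length_range] at hlt
  have hfalse := List.not_of_lt_findIdx (p := isMaxDepth w)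
    (xs := (List.range (w.length + 1)).reverse) (i := w.length - i) (by unfold lastDeep at hi; omega)
  rw [getElem_reverse_range, Nat.sub_sub_self hil] at hfalse
  simp only [← Bool.not_eq_true, isMaxDepth_iff] at hfalse
  push Not at hfalse
  obtain ⟨j, hj, hij⟩ := hfalse
  exact hij.trans_le (depth_le_depth_lastDeep hj)

lemma lastDeep_eq_of {k : ℕ} (hk : k ≤ w.length) (hmax : ∀ i ≤ w.length, depth w i ≤ depth w k)
    (hlast : ∀ i, k < i → i ≤ w.length → depth w i < depth w k) : lastDeep w = k := by
  rcases lt_trichotomy (lastDeep w) k with h | h | h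
  · exact absurd (hmax _ (lastDeep_le_length w)) (not_le.2 (depth_lt_depth_lastDeep h hk))
  · exact h
  · exact absurd (depth_le_depth_lastDeep hk) (not_le.2 (hlast _ h (lastDeep_le_length w)))

lemma getElem_firstDeep_sub_one (h : 1 ≤ firstDeep w)
    (hk : firstDeep w - 1 < w.length := by have := firstDeep_le_length w; omega) :
    w[firstDeep w - 1] = N := by
  have hstep := depth_succ hk
  have hlt := depth_lt_depth_firstDeep (w := w) (i := firstDeep w - 1) (by omega)
  rw [Nat.sub_add_cancel h] at hstep
  revert hstep
  cases w[firstDeep w - 1] <;> simp [Step.height] <;> omega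

lemma getElem_lastDeep (h : lastDeep w < w.length) : w[lastDeep w] = E := by
  have hstep := depth_succ h
  have hlt := depth_lt_depth_lastDeep (Nat.lt_add_one _) h
  revert hstep
  cases w[lastDeep w] <;> simp [Step.height] <;> omega

end DeepestPoints

section Bijection

variable {w : List Step}

lemma depth_phi (h : 1 ≤ firstDeep w) (i : ℕ) :
    depth (phi w) i = depth w i - if firstDeep w - 1 < i then 2 else 0 := by
  have hk : firstDeep w - 1 < w.length := by have := firstDeep_le_length w; omega
  rw [phi, depth_set hk, getElem_firstDeep_sub_one h]
  split_ifs <;> norm_num [Step.height, sub_eq_add_neg]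

lemma lastDeep_phi (h : 1 ≤ firstDeep w) : lastDeep (phi w) = firstDeep w - 1 := by
  have hk := firstDeep_le_length w
  have hpred : depth w (firstDeep w - 1) = depth w (firstDeep w) - 1 := by
    have := depth_succ (w := w) (i := firstDeep w - 1) (by omega)
    rw [Nat.sub_add_cancel h, getElem_firstDeep_sub_one h] at this
    simp only [Step.height] at this
    omega
  have hlen : (phi w).length = w.length := List.length_set
  apply lastDeep_eq_of (by omega)
  · intro i hi
    rw [depth_phi h, depth_phi h, if_neg (lt_irrefl _)]
    split_ifs with hki
    · linarith [depth_le_depth_firstDeep (w := w) (i := i) (by omega)]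
    · linarith [depth_lt_depth_firstDeep (w := w) (i := i) (by omega)]
  · intro i hki hi
    rw [depth_phi h, depth_phi h, if_pos hki, if_neg (lt_irrefl _)]
    linarith [depth_le_depth_firstDeep (w := w) (i := i) (by omega)]

lemma phiInv_phi (h : 1 ≤ firstDeep w) : phiInv (phi w) = w := by
  rw [phiInv, lastDeep_phi h, phi, List.set_set, ← getElem_firstDeep_sub_one h, List.set_getElem_self]

lemma depth_phiInv (h : lastDeep w < w.length) (i : ℕ) :
    depth (phiInv w) i = depth w i + if lastDeep w < i then 2 else 0 := by
  rw [phiInv, depth_set h, getElem_lastDeep h]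
  split_ifs <;> norm_num [Step.height]

lemma firstDeep_phiInv (h : lastDeep w < w.length) : firstDeep (phiInv w) = lastDeep w + 1 := by
  have hsucc : depth w (lastDeep w + 1) = depth w (lastDeep w) - 1 := by
    have := depth_succ h
    rw [getElem_lastDeep h] at this
    simp only [Step.height] at this
    omega
  have hlen : (phiInv w).length = w.length := List.length_set
  apply firstDeep_eq_of (by omega)
  · intro i hi
    rw [depth_phiInv h, depth_phiInv h, if_pos (Nat.lt_add_one _)]
    split_ifs with hki
    · rcases (Nat.succ_le_of_lt hki).eq_or_lt with rfl | hlt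
      · exact le_refl _
      · linarith [depth_lt_depth_lastDeep (w := w) hki (by omega)]
    · linarith [depth_le_depth_lastDeep (w := w) (i := i) (by omega)]
  · intro i hi
    rw [depth_phiInv h, depth_phiInv h, if_pos (Nat.lt_add_one _), if_neg (by omega)]
    linarith [depth_le_depth_lastDeep (w := w) (i := i) (by omega)]

lemma phi_phiInv (h : lastDeep w < w.length) : phi (phiInv w) = w := by
  rw [phi, firstDeep_phiInv h, Nat.add_sub_cancel, phiInv, List.set_set, ← getElem_lastDeep h,
    List.set_getElem_self]

lemma one_le_firstDeep_of_bad (hw : bad w = true) : 1 ≤ firstDeep w := by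
  obtain ⟨k, hk, hpos⟩ := bad_iff_exists_depth_pos.1 hw
  by_contra h0
  have := depth_le_depth_firstDeep hk
  rw [show firstDeep w = 0 by omega, depth_zero] at this
  omega

lemma lastDeep_lt_length_of_depth_neg (hw : depth w w.length < 0) : lastDeep w < w.length := by
  refine (lastDeep_le_length w).lt_of_ne fun h => ?_
  have := depth_le_depth_lastDeep (w := w) (Nat.zero_le _)
  rw [h, depth_zero] at this
  omega

lemma phi_mem_DelSet {n l : ℕ} (hw : w ∈ BDelSet n l) : phi w ∈ DelSet (n + 1) (n - 1) l := by
  obtain ⟨hdel, hbad⟩ := mem_BDelSet.1 hw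
  obtain ⟨hlen, hED, hND⟩ := mem_DelSet.1 hdel
  have h := one_le_firstDeep_of_bad hbad
  have hk : firstDeep w - 1 < w.length := by have := firstDeep_le_length w; omega
  have hE := count_set_cast hk E E
  have hD := count_set_cast hk E D
  have hN := count_set_cast hk E N
  simp only [getElem_firstDeep_sub_one h, reduceCtorEq, if_true, if_false] at hE hD hN
  refine mem_DelSet.2 ⟨List.length_set.trans hlen, ?_, ?_⟩ <;> rw [phi] <;> omega

lemma phiInv_mem_BDelSet {n l : ℕ} (hn : 1 ≤ n) (hw : w ∈ DelSet (n + 1) (n - 1) l) :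
    phiInv w ∈ BDelSet n l := by
  have hend := depth_length_of_mem_DelSet hw
  obtain ⟨hlen, hED, hND⟩ := mem_DelSet.1 hw
  have h := lastDeep_lt_length_of_depth_neg (by rw [hend]; omega)
  have hE := count_set_cast h N E
  have hD := count_set_cast h N D
  have hN := count_set_cast h N N
  simp only [getElem_lastDeep h, reduceCtorEq, if_true, if_false] at hE hD hN
  refine mem_BDelSet.2 ⟨mem_DelSet.2 ⟨List.length_set.trans hlen, ?_, ?_⟩, ?_⟩
  · rw [phiInv]; omega
  · rw [phiInv]; omega
  · refine bad_iff_exists_depth_pos.2 ⟨lastDeep w + 1, by rw [phiInv, List.length_set]; omega, ?_⟩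
    rw [depth_phiInv h, if_pos (Nat.lt_add_one _), depth_succ h, getElem_lastDeep h]
    have := depth_le_depth_lastDeep (w := w) (Nat.zero_le _)
    rw [depth_zero] at this
    simp only [Step.height]
    omega

end Bijection

/-- there is a bijection between bad Delannoy paths from (0,0) to
(n,n) with l steps and Delannoy paths from (0,0) to (n+1,n-1) with l steps. -/
theorem bad_equiv_shifted (n l : ℕ) (hn : 1 ≤ n) :
    Nonempty ((BDelSet n l : Finset (List Step)) ≃ (DelSet (n + 1) (n - 1) l : Finset (List Step))) :=
  ⟨{ toFun := fun w => ⟨phi w, phi_mem_DelSet w.2⟩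
     invFun := fun v => ⟨phiInv v, phiInv_mem_BDelSet hn v.2⟩
     left_inv := fun w => Subtype.ext <| phiInv_phi <|
       one_le_firstDeep_of_bad (mem_BDelSet.1 w.2).2
     right_inv := fun v => Subtype.ext <| phi_phiInv <| lastDeep_lt_length_of_depth_neg <| by
       rw [depth_length_of_mem_DelSet v.2]
       omega }⟩
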